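/- Let X be a subshift over a finite alphabet A and n ≥ 1. Then every word w ∈ L_n(X) which is not a subword of any n-branch word of X is a subword of an isolated periodic point of X. -/

import Mathlib

open Filter Topology

/-- The left shift on bi-infinite sequences, as a bijection. -/
def shiftPerm (A : Type) : Equiv.Perm (ℤ → A) where
  toFun x n := x (n + 1)
  invFun x n := x (n - 1)
  left_inv x := funext fun n => by simp
  right_inv x := funext fun n => by simp

/-- A subshift: a closed, shift-invariant subset of the full shift. -/
def IsSubshift {A : Type} [TopologicalSpace A] (X : Set (ℤ → A)) : Prop :=
  IsClosed X ∧ (shiftPerm A) '' X = X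

/-- The word `w` occurs in some point of `X`. -/
def WordIn {A : Type} (X : Set (ℤ → A)) (w : List A) : Prop :=
  ∃ x ∈ X, ∃ i : ℤ, ∀ j : Fin w.length, x (i + ((j : ℕ) : ℤ)) = w.get j

/-- The language of `X`. -/
def language {A : Type} (X : Set (ℤ → A)) : Set (List A) :=
  {w | WordIn X w}

/-- The word complexity function `c_n(X)`: the number of `n`-letter words of `X`. -/
noncomputable def complexity {A : Type} (X : Set (ℤ → A)) (n : ℕ) : ℕ :=
  Nat.card {w : List A // w.length = n ∧ w ∈ language X}

/-- `w` is a right-special word of length `n` for `X`. -/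
def RightSpecial {A : Type} (X : Set (ℤ → A)) (n : ℕ) (w : List A) : Prop :=
  w.length = n ∧ w ∈ language X ∧
    ∃ a b : A, a ≠ b ∧ (w ++ [a]) ∈ language X ∧ (w ++ [b]) ∈ language X

/-- `w` is a left-special word of length `n` for `X`. -/
def LeftSpecial {A : Type} (X : Set (ℤ → A)) (n : ℕ) (w : List A) : Prop :=
  w.length = n ∧ w ∈ language X ∧
    ∃ c d : A, c ≠ d ∧ (c :: w) ∈ language X ∧ (d :: w) ∈ language X

/-- `w` satisfies the defining constraints of an `n`-right branch word: it is in the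
language, begins with a right-special word of length `n`, contains no other
right-special word of length `n`, and has no repeated `n`-letter subword. -/
def RightBranchCand {A : Type} (X : Set (ℤ → A)) (n : ℕ) (w : List A) : Prop :=
  w ∈ language X ∧ n ≤ w.length ∧ RightSpecial X n (w.take n) ∧
    (∀ i, i + n ≤ w.length → RightSpecial X n ((w.drop i).take n) → i = 0) ∧
    (∀ i j, i + n ≤ w.length → j + n ≤ w.length →
      (w.drop i).take n = (w.drop j).take n → i = j)

/-- `w` satisfies the defining constraints of an `n`-left branch word. -/
def LeftBranchCand {A : Type} (X : Set (ℤ → A)) (n : ℕ) (w : List A) : Prop :=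
  w ∈ language X ∧ n ≤ w.length ∧ LeftSpecial X n (w.drop (w.length - n)) ∧
    (∀ i, i + n ≤ w.length → LeftSpecial X n ((w.drop i).take n) → i + n = w.length) ∧
    (∀ i j, i + n ≤ w.length → j + n ≤ w.length →
      (w.drop i).take n = (w.drop j).take n → i = j)

/-- An `n`-right branch word: maximal under subword inclusion among words
satisfying the right branch constraints. -/
def IsRightBranchWord {A : Type} (X : Set (ℤ → A)) (n : ℕ) (w : List A) : Prop :=
  RightBranchCand X n w ∧ ∀ w', RightBranchCand X n w' → w <:+: w' → w' = w

/-- An `n`-left branch word: maximal under subword inclusion among words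
satisfying the left branch constraints. -/
def IsLeftBranchWord {A : Type} (X : Set (ℤ → A)) (n : ℕ) (w : List A) : Prop :=
  LeftBranchCand X n w ∧ ∀ w', LeftBranchCand X n w' → w <:+: w' → w' = w

/-- An `n`-branch word is an `n`-left or `n`-right branch word. -/
def IsBranchWord {A : Type} (X : Set (ℤ → A)) (n : ℕ) (w : List A) : Prop :=
  IsRightBranchWord X n w ∨ IsLeftBranchWord X n w

/-- `x` is an isolated point of `X`. -/
def IsIsolatedPoint {A : Type} [TopologicalSpace A] (X : Set (ℤ → A)) (x : ℤ → A) : Prop :=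
  ∃ U : Set (ℤ → A), IsOpen U ∧ U ∩ X = {x}

/-- `x` is an isolated periodic point of `X`. -/
def IsIsolatedPeriodicPt {A : Type} [TopologicalSpace A] (X : Set (ℤ → A)) (x : ℤ → A) : Prop :=
  x ∈ X ∧ IsIsolatedPoint X x ∧ ∃ p : ℕ, 1 ≤ p ∧ ∀ m : ℤ, x (m + (p : ℤ)) = x m

/-!
Let `x ∈ X` show `w` at position `a` and follow its windows `u m = x[a + m, a + m + n)`.
By pigeonhole some window repeats; let `k` be the first time this happens, so that
`u 0, …, u (k - 1)` are distinct. The windows from `u 0` up to the first left special one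
span a left branch candidate containing `w`, and the windows from the last right special one
up to the repetition span a right branch candidate containing `w`; as candidates have bounded
length, each extends to a maximal one, i.e. to a branch word. Hence no `u s` with `s < k` is
special, the repetition is `u k = u 0 = w`, and a window that is neither left nor right special
has a unique extension on each side. So every window of `x` is one of the `u s`, `x` is
`k`-periodic, and `x` is the only point of `X` showing `w` at `a`, which makes it isolated.
-/

section

variable {A : Type}

section Windows

def window (x : ℤ → A) (i : ℤ) (n : ℕ) : List A := List.ofFn fun t : Fin n => x (i + t)

variable {x z : ℤ → A} {i j : ℤ} {n : ℕ}

@[simp] lemma length_window : (window x i n).length = n := by simp [window]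
@[simp] lemma getElem_window {t : ℕ} (ht : t < (window x i n).length) :
    (window x i n)[t] = x (i + t) := by simp [window]

lemma window_append (m : ℕ) : window x i (m + n) = window x i m ++ window x (i + m) n := by
  apply List.ext_getElem (by simp)
  intro t h1 h2
  simp only [getElem_window, List.getElem_append, length_window]
  split_ifs with h
  · rfl
  · congr 1; omega

lemma drop_take_window {s l : ℕ} (h : s ≤ l) :
    ((window x i (l + n)).drop s).take n = window x (i + s) n := by
  apply List.ext_getElem (by simp; omega)
  intro t h1 h2
  simp [add_assoc]

lemma drop_window (s : ℕ) : (window x i (s + n)).drop s = window x (i + s) n := by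
  apply List.ext_getElem (by simp)
  intro t h1 h2
  simp [add_assoc]

lemma window_infix {s m : ℕ} (h : s + n ≤ m) : window x (i + s) n <:+: window x i m :=
  ⟨window x i s, window x (i + ↑(s + n)) (m - (s + n)), by
    rw [← Nat.add_sub_of_le h, window_append, window_append, Nat.add_sub_cancel_left,
      Nat.cast_add]⟩

lemma window_ext (h : ∀ t < n, x (i + t) = z (j + t)) : window x i n = window z j n := by
  simp [window, h]

lemma apply_eq_of_window_eq (hn : 1 ≤ n) (h : window x i n = window z j n) : x i = z j := by
  have := List.getElem_of_eq h (i := 0) (by simp; omega)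
  simpa using this

@[simp] lemma window_one : window x i 1 = [x i] := by simp [window]

lemma window_mem_language {X : Set (ℤ → A)} (hx : x ∈ X) : window x i n ∈ language X :=
  ⟨x, hx, i, fun t => by simp [List.get_eq_getElem]⟩

lemma window_concat : window x i n ++ [x (i + n)] = window x i (n + 1) := by
  rw [window_append, window_one]

lemma cons_window : x (i - 1) :: window x i n = window x (i - 1) (1 + n) := by
  rw [window_append, window_one, Nat.cast_one, sub_add_cancel]; rfl

lemma window_succ_eq (h : window x i n = window z j n) (he : x (i + n) = z (j + n)) :
    window x (i + 1) n = window z (j + 1) n := by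
  have h' : window x i (1 + n) = window z j (1 + n) := by
    rw [add_comm, ← window_concat, ← window_concat, h, he]
  rw [window_append, window_append, Nat.cast_one] at h'
  exact (List.append_inj h' (by simp)).2

lemma window_pred_eq (h : window x i n = window z j n) (he : x (i - 1) = z (j - 1)) :
    window x (i - 1) n = window z (j - 1) n := by
  have h' : window x (i - 1) (n + 1) = window z (j - 1) (n + 1) := by
    rw [add_comm, ← cons_window, ← cons_window, h, he]
  rw [window_append, window_append] at h'
  exact (List.append_inj h' (by simp)).1

variable {X : Set (ℤ → A)}

lemma rightSpecial_window_of_ne (hx : x ∈ X) (hz : z ∈ X) (h : window x i n = window z j n)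
    (hne : x (i + n) ≠ z (j + n)) : RightSpecial X n (window x i n) := by
  refine ⟨length_window, window_mem_language hx, _, _, hne, ?_, ?_⟩
  · rw [window_concat]; exact window_mem_language hx
  · rw [h, window_concat]; exact window_mem_language hz

lemma leftSpecial_window_of_ne (hx : x ∈ X) (hz : z ∈ X) (h : window x i n = window z j n)
    (hne : x (i - 1) ≠ z (j - 1)) : LeftSpecial X n (window x i n) := by
  refine ⟨length_window, window_mem_language hx, _, _, hne, ?_, ?_⟩
  · rw [cons_window]; exact window_mem_language hx
  · rw [h, cons_window]; exact window_mem_language hz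

lemma window_succ_eq_of_not_rightSpecial (hx : x ∈ X) (hz : z ∈ X)
    (h : window x i n = window z j n) (hns : ¬ RightSpecial X n (window x i n)) :
    window x (i + 1) n = window z (j + 1) n :=
  window_succ_eq h (not_not.1 fun hne => hns (rightSpecial_window_of_ne hx hz h hne))

lemma window_pred_eq_of_not_leftSpecial (hx : x ∈ X) (hz : z ∈ X)
    (h : window x i n = window z j n) (hns : ¬ LeftSpecial X n (window x i n)) :
    window x (i - 1) n = window z (j - 1) n :=
  window_pred_eq h (not_not.1 fun hne => hns (leftSpecial_window_of_ne hx hz h hne))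

lemma apply_add_eq_of_window_eq (hn : 1 ≤ n) (hx : x ∈ X) (hz : z ∈ X)
    (hR : ∀ m, ¬ RightSpecial X n (window x m n)) (hL : ∀ m, ¬ LeftSpecial X n (window x m n))
    (h : window x i n = window z j n) (m : ℤ) : x (i + m) = z (j + m) := by
  suffices window x (i + m) n = window z (j + m) n from apply_eq_of_window_eq hn this
  induction m with
  | zero => simpa using h
  | succ m ih =>
    rw [← add_assoc, ← add_assoc]
    exact window_succ_eq_of_not_rightSpecial hx hz ih (hR _)
  | pred m ih =>
    rw [← add_sub_assoc, ← add_sub_assoc]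
    exact window_pred_eq_of_not_leftSpecial hx hz ih (hL _)

end Windows

lemma exists_maximal_infix {P : List A → Prop} {B : ℕ} (hB : ∀ c, P c → c.length ≤ B)
    {v c : List A} (hc : P c) (hvc : v <:+: c) :
    ∃ b, (P b ∧ ∀ b', P b' → b <:+: b' → b' = b) ∧ v <:+: b := by
  classical
  let Q : ℕ → Prop := fun m => ∃ c, P c ∧ v <:+: c ∧ c.length = m
  obtain ⟨b, hb, hvb, hlen⟩ : Q (Nat.findGreatest Q B) :=
    Nat.findGreatest_spec (hB c hc) ⟨c, hc, hvc, rfl⟩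
  refine ⟨b, ⟨hb, fun b' hb' hbb' => ?_⟩, hvb⟩
  have : b'.length ≤ b.length :=
    hlen ▸ Nat.le_findGreatest (hB b' hb') ⟨b', hb', hvb.trans hbb', rfl⟩
  exact (hbb'.sublist.eq_of_length (le_antisymm hbb'.length_le this)).symm

lemma length_le_of_injective_windows [Fintype A] {n : ℕ} {c : List A}
    (hinj : ∀ i j, i + n ≤ c.length → j + n ≤ c.length →
      (c.drop i).take n = (c.drop j).take n → i = j) :
    c.length ≤ Fintype.card A ^ n + n := by
  let f : Fin (c.length + 1 - n) → List.Vector A n := fun i =>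
    ⟨(c.drop i).take n, by simp; omega⟩
  have hf : Function.Injective f := fun i j h =>
    Fin.ext (hinj i j (by omega) (by omega) (congrArg Subtype.val h))
  have := Fintype.card_le_of_injective f hf
  simp only [Fintype.card_fin, card_vector] at this
  omega

section BranchCand

variable [Fintype A] {X : Set (ℤ → A)} {n : ℕ} {v c : List A}

lemma exists_isRightBranchWord (hc : RightBranchCand X n c) (hvc : v <:+: c) :
    ∃ b, IsRightBranchWord X n b ∧ v <:+: b :=
  exists_maximal_infix (fun _ h => length_le_of_injective_windows h.2.2.2.2) hc hvc

lemma exists_isLeftBranchWord (hc : LeftBranchCand X n c) (hvc : v <:+: c) :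
    ∃ b, IsLeftBranchWord X n b ∧ v <:+: b :=
  exists_maximal_infix (fun _ h => length_le_of_injective_windows h.2.2.2.2) hc hvc

end BranchCand

section WindowCand

variable {X : Set (ℤ → A)} {x : ℤ → A} {i : ℤ} {n l : ℕ}

lemma rightBranchCand_window (hx : x ∈ X)
    (hinj : ∀ s ≤ l, ∀ t ≤ l, window x (i + s) n = window x (i + t) n → s = t)
    (hrs : RightSpecial X n (window x i n))
    (hrest : ∀ s, 0 < s → s ≤ l → ¬ RightSpecial X n (window x (i + s) n)) :
    RightBranchCand X n (window x i (l + n)) := by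
  refine ⟨window_mem_language hx, by simp, ?_, fun s hs h => ?_, fun s t hs ht h => ?_⟩
  · have h0 := drop_take_window (x := x) (i := i) (n := n) (Nat.zero_le l)
    rw [List.drop_zero, Nat.cast_zero, add_zero] at h0
    rwa [h0]
  · rw [length_window] at hs
    rw [drop_take_window (by omega)] at h
    by_contra hs0
    exact hrest s (by omega) (by omega) h
  · rw [length_window] at hs ht
    rw [drop_take_window (by omega), drop_take_window (by omega)] at h
    exact hinj s (by omega) t (by omega) h

lemma leftBranchCand_window (hx : x ∈ X)
    (hinj : ∀ s ≤ l, ∀ t ≤ l, window x (i + s) n = window x (i + t) n → s = t)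
    (hls : LeftSpecial X n (window x (i + l) n))
    (hfirst : ∀ s < l, ¬ LeftSpecial X n (window x (i + s) n)) :
    LeftBranchCand X n (window x i (l + n)) := by
  refine ⟨window_mem_language hx, by simp, ?_, fun s hs h => ?_, fun s t hs ht h => ?_⟩
  · rwa [length_window, Nat.add_sub_cancel, drop_window]
  · rw [length_window] at hs ⊢
    rw [drop_take_window (by omega)] at h
    by_contra hsl
    exact hfirst s (by omega) h
  · rw [length_window] at hs ht
    rw [drop_take_window (by omega), drop_take_window (by omega)] at h
    exact hinj s (by omega) t (by omega) h

end WindowCand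

lemma exists_first_repeat {β : Type*} {f : ℕ → β} (hf : ¬ Function.Injective f) :
    ∃ k, ∃ i < k, f i = f k ∧ ∀ s < k, ∀ t < k, f s = f t → s = t := by
  classical
  have hex : ∃ k, ∃ i < k, f i = f k := by
    simp only [Function.Injective, not_forall] at hf
    obtain ⟨i, j, hij, hne⟩ := hf
    rcases Nat.lt_or_gt_of_ne hne with h | h
    exacts [⟨j, i, h, hij⟩, ⟨i, j, h, hij.symm⟩]
  obtain ⟨i, hi, hik⟩ := Nat.find_spec hex
  refine ⟨Nat.find hex, i, hi, hik, fun s hs t ht hst => ?_⟩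
  by_contra hne
  rcases Nat.lt_or_gt_of_ne hne with h | h
  exacts [Nat.find_min hex ht ⟨s, h, hst⟩, Nat.find_min hex hs ⟨t, h, hst.symm⟩]

section Cycle

variable {X : Set (ℤ → A)} {x : ℤ → A} {a : ℤ} {n k : ℕ}

lemma not_leftSpecial_of_injOn (hx : x ∈ X)
    (hL : ∀ c, LeftBranchCand X n c → ¬ window x a n <:+: c)
    (hinj : ∀ s < k, ∀ t < k, window x (a + s) n = window x (a + t) n → s = t) :
    ∀ s < k, ¬ LeftSpecial X n (window x (a + s) n) := by
  classical
  intro s hs hls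
  have hex : ∃ j, j < k ∧ LeftSpecial X n (window x (a + j) n) := ⟨s, hs, hls⟩
  obtain ⟨hjk, hj⟩ := Nat.find_spec hex
  refine hL _ (leftBranchCand_window hx (fun s hs t ht => hinj s (by omega) t (by omega)) hj
    fun s hs h => Nat.find_min hex hs ⟨by omega, h⟩) ?_
  simpa using window_infix (x := x) (i := a) (s := 0) (n := n) (m := Nat.find hex + n) (by omega)

/-- If `i > 0`, the window `u i = u k` is not left special, so `u (i - 1) = u (k - 1)`
would be an earlier repetition. -/
lemma eq_zero_of_first_repeat (hx : x ∈ X)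
    (hinj : ∀ s < k, ∀ t < k, window x (a + s) n = window x (a + t) n → s = t)
    (hLS : ∀ s < k, ¬ LeftSpecial X n (window x (a + s) n)) {i : ℕ} (hik : i < k)
    (hrep : window x (a + i) n = window x (a + k) n) : i = 0 := by
  by_contra hi
  have h := window_pred_eq_of_not_leftSpecial hx hx hrep (hLS i hik)
  rw [show a + i - 1 = a + ↑(i - 1) by omega, show a + k - 1 = a + ↑(k - 1) by omega] at h
  have := hinj _ (by omega) _ (by omega) h
  omega

lemma not_rightSpecial_of_cycle (hx : x ∈ X)
    (hR : ∀ c, RightBranchCand X n c → ¬ window x a n <:+: c)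
    (hinj : ∀ s < k, ∀ t < k, window x (a + s) n = window x (a + t) n → s = t)
    (hcyc : window x (a + k) n = window x a n) :
    ∀ s < k, ¬ RightSpecial X n (window x (a + s) n) := by
  classical
  have h0 : ¬ RightSpecial X n (window x a n) := fun hrs =>
    hR _ (rightBranchCand_window (l := 0) hx (by intros; omega) hrs (by intros; omega)) (by simp)
  intro s hs hrs
  let P : ℕ → Prop := fun t => RightSpecial X n (window x (a + t) n)
  set m := Nat.findGreatest P (k - 1)
  have hm : P m := Nat.findGreatest_spec (show s ≤ k - 1 by omega) hrs
  have hsm : s ≤ m := Nat.le_findGreatest (show s ≤ k - 1 by omega) hrs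
  have hmk : m ≤ k - 1 := Nat.findGreatest_le _
  have hm0 : m ≠ 0 := fun hm0 => h0 (by simpa [hm0, P] using hm)
  have key : ∀ t ≤ k - m, window x (a + m + t) n =
      window x (a + ↑(if m + t = k then 0 else m + t)) n := by
    intro t ht
    split_ifs with hkt
    · rw [Nat.cast_zero, add_zero, ← hcyc]; congr 1; omega
    · congr 1; push_cast; ring
  refine hR _ (rightBranchCand_window (i := a + m) (l := k - m) hx ?_ hm ?_) ?_
  · intro s hs t ht h
    rw [key s hs, key t ht] at h
    have := hinj _ (by split_ifs <;> omega) _ (by split_ifs <;> omega) h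
    split_ifs at this <;> omega
  · intro t ht0 ht h
    rw [key t ht] at h
    split_ifs at h with hkt
    · exact h0 (by simpa using h)
    · exact Nat.findGreatest_is_greatest (P := P) (n := k - 1) (show m < m + t by omega)
        (by omega) h
  · have := window_infix (x := x) (i := a + m) (s := k - m) (n := n) (m := k - m + n) le_rfl
    rwa [key _ le_rfl, if_pos (by omega), Nat.cast_zero, add_zero] at this

lemma exists_window_cycle [Finite A] (hx : x ∈ X) (a : ℤ)
    (hR : ∀ c, RightBranchCand X n c → ¬ window x a n <:+: c)
    (hL : ∀ c, LeftBranchCand X n c → ¬ window x a n <:+: c) :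
    ∃ k : ℕ, 1 ≤ k ∧ window x (a + k) n = window x a n ∧
      ∀ s < k, ¬ RightSpecial X n (window x (a + s) n) ∧
        ¬ LeftSpecial X n (window x (a + s) n) := by
  have hf : ¬ Function.Injective fun m : ℕ => window x (a + m) n := fun hinj =>
    Set.infinite_range_of_injective hinj
      ((List.finite_length_eq A n).subset (by rintro _ ⟨m, rfl⟩; exact length_window))
  obtain ⟨k, i, hik, hrep, hinj⟩ := exists_first_repeat hf
  have hLS := not_leftSpecial_of_injOn hx hL hinj
  obtain rfl := eq_zero_of_first_repeat hx hinj hLS hik hrep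
  have hcyc : window x (a + k) n = window x a n := by simpa using hrep.symm
  exact ⟨k, by omega, hcyc,
    fun s hs => ⟨not_rightSpecial_of_cycle hx hR hinj hcyc s hs, hLS s hs⟩⟩

end Cycle

section Isolated

variable {X : Set (ℤ → A)} {x : ℤ → A} {n : ℕ}

lemma exists_window_eq_of_cycle (hx : x ∈ X) {a : ℤ} {k : ℕ} (hk : 1 ≤ k)
    (hcyc : window x (a + k) n = window x a n)
    (hns : ∀ s < k, ¬ RightSpecial X n (window x (a + s) n) ∧
      ¬ LeftSpecial X n (window x (a + s) n)) (m : ℤ) :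
    ∃ s < k, window x m n = window x (a + s) n := by
  induction m using Int.inductionOn' (b := a) with
  | zero => exact ⟨0, hk, by simp⟩
  | succ m _ ih =>
    obtain ⟨s, hs, h⟩ := ih
    have h' := window_succ_eq_of_not_rightSpecial hx hx h (h ▸ (hns s hs).1)
    by_cases hsk : s + 1 < k
    · exact ⟨s + 1, hsk, by rw [h']; push_cast; ring_nf⟩
    · exact ⟨0, hk, by rw [h', show a + s + 1 = a + k by omega, hcyc]; simp⟩
  | pred m _ ih =>
    obtain ⟨s, hs, h⟩ := ih
    have hLm : ¬ LeftSpecial X n (window x m n) := h ▸ (hns s hs).2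
    rcases Nat.eq_zero_or_pos s with rfl | hs0
    · rw [Nat.cast_zero, add_zero, ← hcyc] at h
      exact ⟨k - 1, by omega, by
        rw [window_pred_eq_of_not_leftSpecial hx hx h hLm]; congr 1; omega⟩
    · exact ⟨s - 1, by omega, by
        rw [window_pred_eq_of_not_leftSpecial hx hx h hLm]; congr 1; omega⟩

lemma periodic_of_not_special (hn : 1 ≤ n) (hx : x ∈ X)
    (hR : ∀ m, ¬ RightSpecial X n (window x m n)) (hL : ∀ m, ¬ LeftSpecial X n (window x m n))
    {i : ℤ} {k : ℕ} (h : window x (i + k) n = window x i n) (m : ℤ) : x (m + k) = x m := by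
  have := apply_add_eq_of_window_eq hn hx hx hR hL h (m - i)
  rwa [show i + k + (m - i) = m + k by ring, add_sub_cancel] at this

variable [TopologicalSpace A] [DiscreteTopology A]

lemma isIsolatedPoint_of_not_special (hn : 1 ≤ n) (hx : x ∈ X)
    (hR : ∀ m, ¬ RightSpecial X n (window x m n))
    (hL : ∀ m, ¬ LeftSpecial X n (window x m n)) : IsIsolatedPoint X x := by
  refine ⟨(Set.Ico 0 (n : ℤ)).pi fun t => {x t},
    isOpen_set_pi (Set.finite_Ico _ _) fun _ _ => isOpen_discrete _, ?_⟩
  ext z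
  refine ⟨fun ⟨hzU, hz⟩ => funext fun m => ?_,
    by rintro rfl; exact ⟨fun _ _ => rfl, hx⟩⟩
  have h : window x 0 n = window z 0 n :=
    window_ext fun t ht => (hzU (0 + t) ⟨by omega, by omega⟩).symm
  simpa using (apply_add_eq_of_window_eq hn hx hz hR hL h m).symm

end Isolated

end

theorem not_in_branch_word_imp_isolated_periodic_general
    {A : Type} [Fintype A] [TopologicalSpace A] [DiscreteTopology A]
    (X : Set (ℤ → A)) (n : ℕ) (hn : 1 ≤ n)
    (w : List A) (hwlen : w.length = n) (hwlang : w ∈ language X)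
    (hnb : ∀ v, IsBranchWord X n v → ¬ w <:+: v) :
    ∃ x : ℤ → A, IsIsolatedPeriodicPt X x ∧
      ∃ i : ℤ, ∀ j : Fin w.length, x (i + ((j : ℕ) : ℤ)) = w.get j := by
  obtain ⟨x, hx, a, hxa⟩ := hwlang
  have hw : window x a n = w :=
    List.ext_getElem (by simp [hwlen]) fun t _ ht => by simpa using hxa ⟨t, ht⟩
  subst hw
  obtain ⟨k, hk, hcyc, hns⟩ := exists_window_cycle hx a
    (fun _ hc hwc => let ⟨b, hb, hwb⟩ := exists_isRightBranchWord hc hwc; hnb b (.inl hb) hwb)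
    (fun _ hc hwc => let ⟨b, hb, hwb⟩ := exists_isLeftBranchWord hc hwc; hnb b (.inr hb) hwb)
  have hR : ∀ m, ¬ RightSpecial X n (window x m n) := fun m =>
    let ⟨s, hs, h⟩ := exists_window_eq_of_cycle hx hk hcyc hns m; h ▸ (hns s hs).1
  have hL : ∀ m, ¬ LeftSpecial X n (window x m n) := fun m =>
    let ⟨s, hs, h⟩ := exists_window_eq_of_cycle hx hk hcyc hns m; h ▸ (hns s hs).2
  exact ⟨x, ⟨hx, isIsolatedPoint_of_not_special hn hx hR hL, k, hk,
    periodic_of_not_special hn hx hR hL hcyc⟩, a, hxa⟩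

/-- Every word of length `n` in the language of `X` which is not a
subword of any `n`-branch word is a subword of an isolated periodic point of `X`. -/
theorem not_in_branch_word_imp_isolated_periodic
    {A : Type} [Fintype A] [TopologicalSpace A] [DiscreteTopology A]
    (X : Set (ℤ → A)) (hX : IsSubshift X) (n : ℕ) (hn : 1 ≤ n)
    (w : List A) (hwlen : w.length = n) (hwlang : w ∈ language X)
    (hnb : ∀ v, IsBranchWord X n v → ¬ w <:+: v) :
    ∃ x : ℤ → A, IsIsolatedPeriodicPt X x ∧
      ∃ i : ℤ, ∀ j : Fin w.length, x (i + ((j : ℕ) : ℤ)) = w.get j :=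
  not_in_branch_word_imp_isolated_periodic_general X n hn w hwlen hwlang hnb
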